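/- arXiv:2603.12107 — 10 statements merged into one kernel-verified Lean document; each statement's English description precedes it below -/
import Mathlib

section
/- Let m > 0, t_f > 0, I0 ∈ (0,1), and let x* ∈ (0, t_f) satisfy I(t_f − x*)·(m − x*) = 1. Then for every y ∈ [0, t_f] with y ≠ x*, one has 𝒟(x*, x*) < 𝒟(y, x*). In other words, x* is a strict global Nash equilibrium of the delay-strategy SI social-distancing game: it is the unique best reply to itself among all delay strategies. -/
/-!
Fix the opponents' strategy `x̄ = x*` and write `A = I0 e^{t_f - x*}`, `B = 1 - I0`, so that
`I(t_f - x*) = A / (A + B)` and the equilibrium condition reads `A (m - x*) = A + B`.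
Deviating to `y < x*` keeps the prevalence `c = I(t_f - x*)` but adds the exposure factor
`e^{-c (x* - y)}`; by the equilibrium condition the comparison becomes `e^{-t} (1 + t) < 1`
with `t = c (x* - y)`. Deviating to `y > x*` removes the exposure but lowers the survival ratio
to `1 / (A e^{-δ} + B)` with `δ = y - x*`; the comparison becomes `1 - δ < e^{-δ}`.
Both are strict instances of `1 + t < e^t` for `t ≠ 0`.
-/

/-- Prevalence function `I(u) = I0 / (I0 + (1 - I0) exp(-u))`. -/
noncomputable def Ifun (I0 u : ℝ) : ℝ := I0 / (I0 + (1 - I0) * Real.exp (-u))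

/-- Susceptibility probability `p(x, x̄)`. -/
noncomputable def pSus (tf I0 x xb : ℝ) : ℝ :=
  ((1 - Ifun I0 (tf - max x xb)) / (1 - I0)) *
    Real.exp (-(Ifun I0 (tf - max x xb)) * max (xb - x) 0)

/-- Restricted disutility `𝒟(x, x̄) = 1 - p(x,x̄)(1 - x/m)`. -/
noncomputable def Dis (m tf I0 x xb : ℝ) : ℝ := 1 - pSus tf I0 x xb * (1 - x / m)

open Real

lemma exp_neg_mul_one_add_lt_one {t : ℝ} (ht : t ≠ 0) : exp (-t) * (1 + t) < 1 := by
  calc exp (-t) * (1 + t) < exp (-t) * exp t := by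
        gcongr; linarith [add_one_lt_exp ht]
    _ = 1 := by rw [← exp_add, neg_add_cancel, exp_zero]

lemma Ifun_eq_div (I0 u : ℝ) : Ifun I0 u = I0 * exp u / (I0 * exp u + (1 - I0)) := by
  rw [Ifun, ← mul_div_mul_right _ _ (exp_pos u).ne', add_mul, mul_assoc, exp_neg,
    inv_mul_cancel₀ (exp_pos u).ne', mul_one]

section Game

variable {m tf I0 x y : ℝ}

lemma mul_exp_add_one_sub_pos (hI0 : I0 ∈ Set.Ioo (0 : ℝ) 1) (u : ℝ) :
    0 < I0 * exp u + (1 - I0) := by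
  linarith [hI0.2, mul_pos hI0.1 (exp_pos u)]

lemma Ifun_pos (hI0 : I0 ∈ Set.Ioo (0 : ℝ) 1) (u : ℝ) : 0 < Ifun I0 u := by
  rw [Ifun_eq_div]
  exact div_pos (mul_pos hI0.1 (exp_pos u)) (mul_exp_add_one_sub_pos hI0 u)

lemma one_sub_Ifun_div (hI0 : I0 ∈ Set.Ioo (0 : ℝ) 1) (u : ℝ) :
    (1 - Ifun I0 u) / (1 - I0) = (I0 * exp u + (1 - I0))⁻¹ := by
  have hB : 1 - I0 ≠ 0 := by linarith [hI0.2]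
  have hD := (mul_exp_add_one_sub_pos hI0 u).ne'
  rw [Ifun_eq_div]
  field_simp
  ring

lemma pSus_of_le (h : y ≤ x) : pSus tf I0 x y = (1 - Ifun I0 (tf - x)) / (1 - I0) := by
  simp [pSus, max_eq_left h, max_eq_right (sub_nonpos.2 h)]

lemma pSus_of_ge (h : x ≤ y) :
    pSus tf I0 x y = pSus tf I0 y y * exp (-Ifun I0 (tf - y) * (y - x)) := by
  simp [pSus, max_eq_right h, max_eq_left (sub_nonneg.2 h)]

lemma Dis_self_lt_of_lt (hm : 0 < m) (hI0 : I0 ∈ Set.Ioo (0 : ℝ) 1)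
    (heq : Ifun I0 (tf - x) * (m - x) = 1) (hy : y < x) :
    Dis m tf I0 x x < Dis m tf I0 y x := by
  set c := Ifun I0 (tf - x)
  have hc : 0 < c := Ifun_pos hI0 _
  have hp : 0 < pSus tf I0 x x := by
    rw [pSus_of_le le_rfl, one_sub_Ifun_div hI0]
    exact inv_pos.2 (mul_exp_add_one_sub_pos hI0 _)
  have key : exp (-c * (x - y)) * (m - y) < m - x := by
    refine lt_of_mul_lt_mul_left ?_ hc.le
    calc c * (exp (-c * (x - y)) * (m - y)) = exp (-(c * (x - y))) * (1 + c * (x - y)) := by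
          rw [← heq]; ring_nf
      _ < 1 := exp_neg_mul_one_add_lt_one (mul_pos hc (sub_pos.2 hy)).ne'
      _ = c * (m - x) := heq.symm
  have key_scaled : exp (-c * (x - y)) * (1 - y / m) < 1 - x / m := by
    rw [one_sub_div hm.ne', one_sub_div hm.ne', ← mul_div_assoc]
    exact div_lt_div_of_pos_right key hm
  rw [Dis, Dis, pSus_of_ge hy.le, mul_assoc]
  linarith [mul_lt_mul_of_pos_left key_scaled hp]

lemma Dis_self_lt_of_gt (hm : 0 < m) (hI0 : I0 ∈ Set.Ioo (0 : ℝ) 1)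
    (heq : Ifun I0 (tf - x) * (m - x) = 1) (hy : x < y) :
    Dis m tf I0 x x < Dis m tf I0 y x := by
  set A := I0 * exp (tf - x)
  set B := 1 - I0
  set δ := y - x
  have hA : 0 < A := mul_pos hI0.1 (exp_pos _)
  have hB : 0 < B := sub_pos.2 hI0.2
  have hAy : I0 * exp (tf - y) = A * exp (-δ) := by
    rw [show tf - y = (tf - x) + -δ by ring, exp_add]; ring
  have heq' : A * (m - x) = A + B := by
    rw [Ifun_eq_div, div_mul_eq_mul_div, div_eq_one_iff_eq (by positivity)] at heq
    exact heq
  have key : (m - y) * (A + B) < (m - x) * (A * exp (-δ) + B) := by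
    refine lt_of_mul_lt_mul_left ?_ hA.le
    calc A * ((m - y) * (A + B)) = (A + B) * (A * (1 - δ) + B) := by
          linear_combination (A + B) * heq'
      _ < (A + B) * (A * exp (-δ) + B) := by
          gcongr; exact one_sub_lt_exp_neg (sub_pos.2 hy).ne'
      _ = A * ((m - x) * (A * exp (-δ) + B)) := by
          linear_combination -(A * exp (-δ) + B) * heq'
  rw [Dis, Dis, pSus_of_le le_rfl, pSus_of_le hy.le, one_sub_Ifun_div hI0,
    one_sub_Ifun_div hI0, hAy, sub_lt_sub_iff_left, one_sub_div hm.ne',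
    one_sub_div hm.ne', inv_mul_eq_div, inv_mul_eq_div, div_div, div_div,
    div_lt_div_iff₀ (by positivity) (by positivity)]
  linarith [mul_lt_mul_of_pos_right key hm]

end Game

theorem stmt0_general (m tf I0 xstar : ℝ) (hm : 0 < m)
    (hI0 : I0 ∈ Set.Ioo (0:ℝ) 1)
    (heq : Ifun I0 (tf - xstar) * (m - xstar) = 1) :
    ∀ y ∈ Set.Icc (0:ℝ) tf, y ≠ xstar →
      Dis m tf I0 xstar xstar < Dis m tf I0 y xstar := by
  intro y _ hne
  rcases hne.lt_or_gt with hy | hy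
  · exact Dis_self_lt_of_lt hm hI0 heq hy
  · exact Dis_self_lt_of_gt hm hI0 heq hy

/-- An interior Nash equilibrium `x*` (satisfying `I(t_f - x*)(m - x*) = 1`) is a strict
global Nash equilibrium: the unique best reply to itself among all delay strategies. -/
theorem stmt0 (m tf I0 xstar : ℝ) (hm : 0 < m) (htf : 0 < tf)
    (hI0 : I0 ∈ Set.Ioo (0:ℝ) 1) (hx : xstar ∈ Set.Ioo 0 tf)
    (heq : Ifun I0 (tf - xstar) * (m - xstar) = 1) :
    ∀ y ∈ Set.Icc (0:ℝ) tf, y ≠ xstar →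
      Dis m tf I0 xstar xstar < Dis m tf I0 y xstar :=
  stmt0_general m tf I0 xstar hm hI0 heq
end

section
/- Let m > 0, t_f > 0, I0 ∈ (0,1), and define I(u) = I0 / (I0 + (1 − I0)·exp(−u)). Suppose x ∈ (0, t_f) satisfies I(t_f − x) = 1/(m − x). Then x is a global minimizer of the function g(y) = (1 − I(t_f − y))·(y/m − 1): for all y ∈ [0, t_f], g(x) ≤ g(y), with strict inequality for y ≠ x. -/
/-- If `x ∈ (0, t_f)` satisfies `I(t_f - x) = 1/(m - x)`, then `x` is the strict global
minimizer on `[0, t_f]` of `g(y) = (1 - I(t_f - y))(y/m - 1)`. -/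
theorem stmt3 (m tf I0 x : ℝ) (hm : 0 < m) (htf : 0 < tf)
    (hI0 : I0 ∈ Set.Ioo (0:ℝ) 1) (hx : x ∈ Set.Ioo 0 tf)
    (heq : Ifun I0 (tf - x) = 1 / (m - x)) :
    ∀ y ∈ Set.Icc (0:ℝ) tf,
      (1 - Ifun I0 (tf - x)) * (x / m - 1) ≤ (1 - Ifun I0 (tf - y)) * (y / m - 1) ∧
      (y ≠ x →
        (1 - Ifun I0 (tf - x)) * (x / m - 1) < (1 - Ifun I0 (tf - y)) * (y / m - 1)) := by
  obtain ⟨hI0p, hI0l⟩ := hI0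
  obtain ⟨hx0, hxtf⟩ := hx
  set c := (1 - I0) * Real.exp (-tf) with hc
  have hcpos : 0 < c := mul_pos (by linarith) (Real.exp_pos _)
  have hIfun : ∀ u : ℝ, Ifun I0 (tf - u) = I0 / (I0 + c * Real.exp u) := by
    intro u
    unfold Ifun
    rw [hc, show -(tf - u) = -tf + u by ring, Real.exp_add]
    ring_nf
  have hD : ∀ u : ℝ, 0 < I0 + c * Real.exp u := fun u => by positivity
  have hx' : I0 / (I0 + c * Real.exp x) = 1 / (m - x) := by rw [← hIfun]; exact heq
  have hmx : 0 < m - x := by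
    have h1 : 0 < 1 / (m - x) := hx' ▸ div_pos hI0p (hD x)
    exact (one_div_pos).mp h1
  have hex : c * Real.exp x = I0 * (m - x - 1) := by
    have hne : I0 + c * Real.exp x ≠ 0 := ne_of_gt (hD x)
    have hne2 : m - x ≠ 0 := ne_of_gt hmx
    field_simp at hx'
    linarith [hx']
  have hmx1 : 0 < m - x - 1 := by
    have := mul_pos hcpos (Real.exp_pos x)
    nlinarith
  -- value at x
  have hgx : (1 - Ifun I0 (tf - x)) * (x / m - 1) = (x + 1 - m) / m := by
    rw [heq]
    field_simp
    ring
  have hdiff : ∀ y : ℝ,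
      (1 - Ifun I0 (tf - y)) * (y / m - 1) - (x + 1 - m) / m
        = (c * Real.exp y * (y - x - 1) + I0 * (m - x - 1)) / (m * (I0 + c * Real.exp y)) := by
    intro y
    rw [hIfun y]
    have hDy : I0 + c * Real.exp y ≠ 0 := ne_of_gt (hD y)
    field_simp
    ring
  intro y hy
  have hkey : Real.exp y * (x - y + 1) ≤ Real.exp x := by
    have h1 : (x - y) + 1 ≤ Real.exp (x - y) := Real.add_one_le_exp _
    have h2 : Real.exp x = Real.exp y * Real.exp (x - y) := by
      rw [← Real.exp_add]; ring_nf
    nlinarith [Real.exp_pos y]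
  constructor
  · rw [hgx, ← sub_nonneg, hdiff y]
    apply div_nonneg
    · nlinarith [hkey, hcpos, Real.exp_pos y]
    · positivity
  · intro hne
    have hkey' : Real.exp y * (x - y + 1) < Real.exp x := by
      have h1 : (x - y) + 1 < Real.exp (x - y) :=
        Real.add_one_lt_exp (by intro h; apply hne; linarith [sub_eq_zero.mp h])
      have h2 : Real.exp x = Real.exp y * Real.exp (x - y) := by
        rw [← Real.exp_add]; ring_nf
      nlinarith [Real.exp_pos y]
    rw [hgx, ← sub_pos, hdiff y]
    apply div_pos
    · nlinarith [hkey', hcpos, Real.exp_pos y]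
    · positivity
end

section
/- Let m > 0, t_f > 0, I0 ∈ (0,1). The function p(x,x̄) = ((1 − I(s(x,x̄))) / (1 − I0)) · exp(−I(s(x,x̄)) · max(x̄ − x, 0)), where s(x,x̄) = t_f − max(x, x̄) and I(u) = I0/(I0 + (1 − I0)·exp(−u)), is continuously differentiable on the open square (0, t_f) × (0, t_f); in particular both partial derivatives exist and are continuous there, even across the diagonal x = x̄ where max(x, x̄) and max(x̄ − x, 0) are individually non-differentiable. Consequently 𝒟(x,x̄) = 1 − p(x,x̄)·(1 − x/m) is continuously differentiable on (0, t_f) × (0, t_f). -/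
/-!
Write `p(x, x̄) = Φ(x, max x x̄)` with the smooth function
`Φ(x, M) = ((1 - I(t_f - M)) / (1 - I0)) · exp(-I(t_f - M) · (M - x))`.
Composing a `C¹` map with `(x, x̄) ↦ (x, max x x̄)` stays `C¹` as soon as `∂Φ/∂M` vanishes on
the diagonal: on `{x ≥ x̄}` the derivative of `Φ` then ignores the second direction, so the kink
of the max is invisible. For this `Φ` the vanishing is the logistic equation `I' = I (1 - I)`.
-/

open Filter Topology Asymptotics

section ChainRule

variable {𝕜 E F G : Type*} [NontriviallyNormedField 𝕜]
  [NormedAddCommGroup E] [NormedSpace 𝕜 E] [NormedAddCommGroup F] [NormedSpace 𝕜 F]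
  [NormedAddCommGroup G] [NormedSpace 𝕜 G]

theorem HasFDerivAt.comp_of_isBigO_sub {f : F → G} {g : E → F} {f' : F →L[𝕜] G}
    {L : E →L[𝕜] G} {x : E} (hf : HasFDerivAt f f' (g x))
    (hg : (fun y => g y - g x) =O[𝓝 x] fun y => y - x)
    (hL : ∀ᶠ y in 𝓝 x, f' (g y - g x) = L (y - x)) : HasFDerivAt (f ∘ g) L x := by
  have hgx : Tendsto g (𝓝 x) (𝓝 (g x)) :=
    tendsto_sub_nhds_zero_iff.1 (hg.trans_tendsto (tendsto_sub_nhds_zero_iff.2 tendsto_id))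
  refine HasFDerivAt.of_isLittleO <|
    ((hf.isLittleO.comp_tendsto hgx).trans_isBigO hg).congr' ?_ EventuallyEq.rfl
  filter_upwards [hL] with y hy
  simp only [Function.comp_apply, hy]

end ChainRule

section MaxComposition

variable {F : Type*} [NormedAddCommGroup F] [NormedSpace ℝ F]

theorem norm_prodMk_max_sub_le (y q : ℝ × ℝ) :
    ‖((y.1, max y.1 y.2) - (q.1, max q.1 q.2) : ℝ × ℝ)‖ ≤ ‖y - q‖ := by
  simp only [Prod.norm_def, Prod.fst_sub, Prod.snd_sub, Real.norm_eq_abs]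
  exact max_le (le_max_left _ _) (abs_max_sub_max_le_max _ _ _ _)

theorem fderiv_apply_zero_fst_eq_zero {Φ : ℝ × ℝ → F} {x : ℝ}
    (hΦ : DifferentiableAt ℝ Φ (x, x)) (hdiag : HasDerivAt (fun y => Φ (x, y)) 0 x) (t : ℝ) :
    fderiv ℝ Φ (x, x) (0, t) = 0 := by
  have hline : HasDerivAt (fun y => Φ (x, y)) (fderiv ℝ Φ (x, x) (0, 1)) x :=
    hΦ.hasFDerivAt.comp_hasDerivAt x ((hasDerivAt_const x x).prodMk (hasDerivAt_id x))
  have hunit : fderiv ℝ Φ (x, x) (0, 1) = 0 := hline.unique hdiag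
  rw [show ((0 : ℝ), t) = t • ((0 : ℝ), (1 : ℝ)) by simp, map_smul, hunit, smul_zero]

theorem hasFDerivAt_comp_prodMk_max {Φ : ℝ × ℝ → F} (hΦ : Differentiable ℝ Φ)
    (hdiag : ∀ x, HasDerivAt (fun y => Φ (x, y)) 0 x) (q : ℝ × ℝ) :
    HasFDerivAt (fun y : ℝ × ℝ => Φ (y.1, max y.1 y.2)) (fderiv ℝ Φ (q.1, max q.1 q.2)) q := by
  refine (hΦ _).hasFDerivAt.comp_of_isBigO_sub (g := fun y : ℝ × ℝ => (y.1, max y.1 y.2))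
    (isBigO_of_le _ fun y => norm_prodMk_max_sub_le y q) ?_
  rcases lt_or_ge q.1 q.2 with hlt | hge
  · filter_upwards [(isOpen_lt continuous_fst continuous_snd).mem_nhds hlt] with y hy
    simp only [max_eq_right hy.le, max_eq_right hlt.le]
  · refine Eventually.of_forall fun y => ?_
    have hsplit : ((y.1, max y.1 y.2) - (q.1, max q.1 q.2) : ℝ × ℝ) =
        (y - q) + (0, max y.1 y.2 - q.1 - (y.2 - q.2)) := by
      ext <;> simp [max_eq_left hge]
    rw [hsplit, map_add, max_eq_left hge,
      fderiv_apply_zero_fst_eq_zero (hΦ _) (hdiag q.1), add_zero]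

theorem contDiff_one_comp_prodMk_max {Φ : ℝ × ℝ → F} (hΦ : ContDiff ℝ 1 Φ)
    (hdiag : ∀ x, HasDerivAt (fun y => Φ (x, y)) 0 x) :
    ContDiff ℝ 1 (fun y : ℝ × ℝ => Φ (y.1, max y.1 y.2)) := by
  have hderiv q := hasFDerivAt_comp_prodMk_max (hΦ.differentiable one_ne_zero) hdiag q
  rw [contDiff_one_iff_fderiv]
  refine ⟨fun q => (hderiv q).differentiableAt, ?_⟩
  rw [funext fun q => (hderiv q).fderiv]
  exact (hΦ.continuous_fderiv one_ne_zero).comp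
    (continuous_fst.prodMk (continuous_fst.max continuous_snd))

end MaxComposition

section Epidemic

variable {I0 : ℝ}

theorem Ifun_denom_pos (h0 : 0 ≤ I0) (h1 : I0 ≤ 1) (u : ℝ) :
    0 < I0 + (1 - I0) * Real.exp (-u) := by
  rcases h0.eq_or_lt with rfl | hpos
  · simpa using Real.exp_pos (-u)
  · have := mul_nonneg (sub_nonneg.2 h1) (Real.exp_pos (-u)).le
    linarith

theorem contDiff_Ifun (h0 : 0 ≤ I0) (h1 : I0 ≤ 1) {n : WithTop ℕ∞} :
    ContDiff ℝ n (Ifun I0) :=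
  contDiff_const.div (contDiff_const.add (contDiff_const.mul (Real.contDiff_exp.comp contDiff_neg)))
    fun u => (Ifun_denom_pos h0 h1 u).ne'

theorem hasDerivAt_Ifun (h0 : 0 ≤ I0) (h1 : I0 ≤ 1) (u : ℝ) :
    HasDerivAt (Ifun I0) (Ifun I0 u * (1 - Ifun I0 u)) u := by
  have hdenom : HasDerivAt (fun v => I0 + (1 - I0) * Real.exp (-v))
      ((1 - I0) * (Real.exp (-u) * -1)) u :=
    (((hasDerivAt_neg u).exp).const_mul (1 - I0)).const_add I0
  refine ((hasDerivAt_const u I0).div hdenom (Ifun_denom_pos h0 h1 u).ne').congr_deriv ?_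
  have := (Ifun_denom_pos h0 h1 u).ne'
  simp only [Ifun]
  field_simp
  ring

noncomputable def pSusExt (tf I0 : ℝ) (q : ℝ × ℝ) : ℝ :=
  ((1 - Ifun I0 (tf - q.2)) / (1 - I0)) * Real.exp (-(Ifun I0 (tf - q.2)) * (q.2 - q.1))

theorem pSus_eq_pSusExt (tf I0 x xb : ℝ) : pSus tf I0 x xb = pSusExt tf I0 (x, max x xb) := by
  have : max (xb - x) 0 = max x xb - x := by
    rw [max_comm x xb, ← max_sub_sub_right xb x x, sub_self]
  rw [pSus, pSusExt, this]

theorem contDiff_pSusExt (tf : ℝ) (h0 : 0 ≤ I0) (h1 : I0 ≤ 1) {n : WithTop ℕ∞} :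
    ContDiff ℝ n (pSusExt tf I0) := by
  have hI : ContDiff ℝ n fun q : ℝ × ℝ => Ifun I0 (tf - q.2) :=
    (contDiff_Ifun h0 h1).comp (contDiff_const.sub contDiff_snd)
  exact ((contDiff_const.sub hI).div_const _).mul (hI.neg.mul (contDiff_snd.sub contDiff_fst)).exp

theorem hasDerivAt_pSusExt_snd_diag (tf : ℝ) (h0 : 0 ≤ I0) (h1 : I0 ≤ 1) (x : ℝ) :
    HasDerivAt (fun M => pSusExt tf I0 (x, M)) 0 x := by
  set K := Ifun I0 (tf - x)
  have hI : HasDerivAt (fun M => Ifun I0 (tf - M)) (K * (1 - K) * -1) x :=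
    (hasDerivAt_Ifun h0 h1 (tf - x)).comp x ((hasDerivAt_id x).const_sub tf)
  have h := ((hI.const_sub 1).div_const (1 - I0)).mul
    ((hI.neg.mul ((hasDerivAt_id x).sub_const x)).exp)
  refine h.congr_deriv ?_
  simp only [Pi.mul_apply, Pi.neg_apply, id, sub_self, mul_zero, Real.exp_zero, mul_one]
  ring

end Epidemic

theorem stmt4_general (m tf I0 : ℝ)
    (hI0 : I0 ∈ Set.Ioo (0:ℝ) 1) :
    ContDiffOn ℝ 1 (fun q : ℝ × ℝ => pSus tf I0 q.1 q.2)
      (Set.Ioo 0 tf ×ˢ Set.Ioo 0 tf) ∧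
    ContDiffOn ℝ 1 (fun q : ℝ × ℝ => Dis m tf I0 q.1 q.2)
      (Set.Ioo 0 tf ×ˢ Set.Ioo 0 tf) := by
  obtain ⟨h0, h1⟩ := hI0
  have hp : ContDiff ℝ 1 fun q : ℝ × ℝ => pSus tf I0 q.1 q.2 := by
    simp only [pSus_eq_pSusExt]
    exact contDiff_one_comp_prodMk_max (contDiff_pSusExt tf h0.le h1.le)
      (hasDerivAt_pSusExt_snd_diag tf h0.le h1.le)
  have hD : ContDiff ℝ 1 fun q : ℝ × ℝ => Dis m tf I0 q.1 q.2 :=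
    contDiff_const.sub (hp.mul (contDiff_const.sub (contDiff_fst.div_const m)))
  exact ⟨hp.contDiffOn, hD.contDiffOn⟩

/-- The susceptibility probability `p` is continuously differentiable on the open square
`(0, t_f) × (0, t_f)` (even across the diagonal `x = x̄`), and consequently so is the
restricted disutility `𝒟`. -/
theorem stmt4 (m tf I0 : ℝ) (hm : 0 < m) (htf : 0 < tf)
    (hI0 : I0 ∈ Set.Ioo (0:ℝ) 1) :
    ContDiffOn ℝ 1 (fun q : ℝ × ℝ => pSus tf I0 q.1 q.2)
      (Set.Ioo 0 tf ×ˢ Set.Ioo 0 tf) ∧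
    ContDiffOn ℝ 1 (fun q : ℝ × ℝ => Dis m tf I0 q.1 q.2)
      (Set.Ioo 0 tf ×ˢ Set.Ioo 0 tf) :=
  stmt4_general m tf I0 hI0
end

section
/- Let m > 0, t_f > 0, I0 ∈ (0,1), and let x* ∈ (0, t_f) satisfy I(t_f − x*)·(m − x*) = 1. Then the emblematic disutility at the equilibrium has the closed form E(x*) = (1 + x* − m·I0) / (m·(1 − I0)). -/
/-- Emblematic disutility `E(x̄) = 1 - (1 - x̄/m)(1 - I(t_f - x̄))/(1 - I0)`. -/
noncomputable def Embl (m tf I0 xb : ℝ) : ℝ :=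
  1 - (1 - xb / m) * (1 - Ifun I0 (tf - xb)) / (1 - I0)

theorem one_sub_div_mul_one_sub_eq_of_mul_eq_one {m x p : ℝ} (hm : m ≠ 0)
    (hp : p * (m - x) = 1) : (1 - x / m) * (1 - p) = (m - x - 1) / m := by
  field_simp
  linear_combination -hp

theorem stmt7_general (m tf I0 xstar : ℝ) (hm : 0 < m)
    (hI0 : I0 ∈ Set.Ioo (0:ℝ) 1)
    (heq : Ifun I0 (tf - xstar) * (m - xstar) = 1) :
    Embl m tf I0 xstar = (1 + xstar - m * I0) / (m * (1 - I0)) := by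
  have hI0 : 1 - I0 ≠ 0 := sub_ne_zero.mpr hI0.2.ne'
  rw [Embl, one_sub_div_mul_one_sub_eq_of_mul_eq_one hm.ne' heq]
  field_simp
  ring

/-- At an interior Nash equilibrium `x*`, the emblematic disutility has the closed form
`E(x*) = (1 + x* - m I0) / (m (1 - I0))`. -/
theorem stmt7 (m tf I0 xstar : ℝ) (hm : 0 < m) (htf : 0 < tf)
    (hI0 : I0 ∈ Set.Ioo (0:ℝ) 1) (hx : xstar ∈ Set.Ioo 0 tf)
    (heq : Ifun I0 (tf - xstar) * (m - xstar) = 1) :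
    Embl m tf I0 xstar = (1 + xstar - m * I0) / (m * (1 - I0)) :=
  stmt7_general m tf I0 xstar hm hI0 heq
end

section
/- Let m > 1, t_f > 0, I0 ∈ (0,1). There exists x ∈ (0, t_f) with I(t_f − x)·(m − x) = 1 if and only if both I0·(1 + (m − 1)·exp(t_f)) > 1 and I0·(m − t_f) < 1 hold; moreover, when it exists such x is unique. (The first inequality failing corresponds to the no-distancing equilibrium x* = 0, the second failing to the always-distance equilibrium x* = t_f.) -/
/-- An interior equilibrium `x ∈ (0, t_f)` with `I(t_f - x)(m - x) = 1` exists if and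
only if `I0 (1 + (m-1) exp(t_f)) > 1` and `I0 (m - t_f) < 1`; when it exists it is
unique. -/
theorem stmt10 (m tf I0 : ℝ) (hm : 1 < m) (htf : 0 < tf)
    (hI0 : I0 ∈ Set.Ioo (0:ℝ) 1) :
    ((∃ x ∈ Set.Ioo (0:ℝ) tf, Ifun I0 (tf - x) * (m - x) = 1) ↔
      (1 < I0 * (1 + (m - 1) * Real.exp tf) ∧ I0 * (m - tf) < 1)) ∧
    ∀ x ∈ Set.Ioo (0:ℝ) tf, ∀ y ∈ Set.Ioo (0:ℝ) tf,
      Ifun I0 (tf - x) * (m - x) = 1 → Ifun I0 (tf - y) * (m - y) = 1 → x = y := by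
  obtain ⟨hI0p, hI0lt⟩ := hI0
  have h1 : (0:ℝ) < 1 - I0 := by linarith
  set F : ℝ → ℝ := fun x => I0 * (m - x - 1) - (1 - I0) * Real.exp (x - tf) with hF
  have hiff : ∀ x : ℝ, Ifun I0 (tf - x) * (m - x) = 1 ↔ F x = 0 := by
    intro x
    have hD : 0 < I0 + (1 - I0) * Real.exp (-(tf - x)) :=
      add_pos hI0p (mul_pos h1 (Real.exp_pos _))
    rw [Ifun, div_mul_eq_mul_div, div_eq_one_iff_eq hD.ne',
      show -(tf - x) = x - tf by ring]
    constructor <;> intro h <;> (try simp only [hF]) <;> (try simp only [hF] at h) <;>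
      linear_combination h
  have hmono : ∀ x y : ℝ, x < y → F y < F x := by
    intro x y hxy
    have hexp : Real.exp (x - tf) < Real.exp (y - tf) :=
      Real.exp_lt_exp.2 (by linarith)
    have h2 := mul_lt_mul_of_pos_left hexp h1
    have h3 := mul_lt_mul_of_pos_left hxy hI0p
    simp only [hF]
    nlinarith
  have hE : Real.exp (0 - tf) * Real.exp tf = 1 := by
    rw [← Real.exp_add]; norm_num
  have hFtf : F tf = I0 * (m - tf - 1) - (1 - I0) := by
    simp [hF, Real.exp_zero]
  constructor
  · constructor
    · rintro ⟨x, hx, hfx⟩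
      rw [hiff] at hfx
      have hF0 : 0 < F 0 := by have := hmono 0 x hx.1; linarith
      have hFt : F tf < 0 := by have := hmono x tf hx.2; linarith
      constructor
      · simp only [hF] at hF0
        nlinarith [Real.exp_pos tf, Real.exp_pos (0 - tf),
          mul_lt_mul_of_pos_right hF0 (Real.exp_pos tf)]
      · rw [hFtf] at hFt; nlinarith
    · rintro ⟨hc1, hc2⟩
      have hF0 : 0 < F 0 := by
        simp only [hF]
        nlinarith [Real.exp_pos tf, Real.exp_pos (0 - tf),
          mul_pos (mul_pos hI0p (Real.exp_pos (0 - tf))) (Real.exp_pos tf)]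
      have hFt : F tf < 0 := by rw [hFtf]; nlinarith
      have hcont : Continuous F := by
        simp only [hF]; fun_prop
      obtain ⟨x, hx, hfx⟩ := intermediate_value_Ioo' htf.le hcont.continuousOn
        (Set.mem_Ioo.2 ⟨hFt, hF0⟩)
      exact ⟨x, hx, (hiff x).2 hfx⟩
  · intro x hx y hy hfx hfy
    rw [hiff] at hfx hfy
    rcases lt_trichotomy x y with h | h | h
    · have := hmono x y h; linarith
    · exact h
    · have := hmono y x h; linarith
end

section
/- Let m > 1, t_f > 0, I0 ∈ (0,1). The transcendental equation exp(x) = exp(t_f)·(I0/(1 − I0))·(m − 1 − x) has exactly one real solution x. Moreover, a point x ∈ (0, t_f) satisfies the interior equilibrium condition I(t_f − x)·(m − x) = 1 if and only if x solves this transcendental equation. -/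
open Real Filter

theorem bijective_exp_add_mul {C : ℝ} (hC : 0 < C) :
    Function.Bijective fun x => exp x + C * x := by
  refine ⟨(exp_strictMono.add (strictMono_mul_left_of_pos hC)).injective, ?_⟩
  exact (by fun_prop : Continuous fun x => exp x + C * x).surjective
    (tendsto_exp_atTop.atTop_add_atTop (tendsto_id.const_mul_atTop hC))
    (tendsto_exp_atBot.add_atBot (tendsto_id.const_mul_atBot hC))

theorem existsUnique_exp_eq_mul_sub {C : ℝ} (hC : 0 < C) (a : ℝ) :
    ∃! x, exp x = C * (a - x) := by
  convert (bijective_exp_add_mul hC).existsUnique (C * a) using 2 with x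
  constructor <;> intro h <;> linarith

theorem Ifun_mul_eq_one_iff {I0 : ℝ} (hI0 : I0 ∈ Set.Ioo (0 : ℝ) 1) (t x m : ℝ) :
    Ifun I0 (t - x) * (m - x) = 1 ↔ exp x = exp t * (I0 / (1 - I0)) * (m - 1 - x) := by
  obtain ⟨hI0_pos, hI0_lt⟩ := hI0
  have hcompl : 0 < 1 - I0 := sub_pos.2 hI0_lt
  have hdenom : 0 < I0 + (1 - I0) * exp (-(t - x)) := by positivity
  rw [Ifun, div_mul_eq_mul_div, div_eq_one_iff_eq hdenom.ne', neg_sub, exp_sub]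
  field_simp
  constructor <;> intro h <;> linarith

theorem stmt11_general (m tf I0 : ℝ)
    (hI0 : I0 ∈ Set.Ioo (0:ℝ) 1) :
    (∃! x : ℝ, Real.exp x = Real.exp tf * (I0 / (1 - I0)) * (m - 1 - x)) ∧
    ∀ x ∈ Set.Ioo (0:ℝ) tf,
      (Ifun I0 (tf - x) * (m - x) = 1 ↔
        Real.exp x = Real.exp tf * (I0 / (1 - I0)) * (m - 1 - x)) := by
  have hC : 0 < exp tf * (I0 / (1 - I0)) :=
    mul_pos (exp_pos tf) (div_pos hI0.1 (sub_pos.2 hI0.2))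
  exact ⟨existsUnique_exp_eq_mul_sub hC (m - 1), fun x _ => Ifun_mul_eq_one_iff hI0 tf x m⟩

/-- The transcendental equation `exp(x) = exp(t_f) (I0/(1-I0)) (m - 1 - x)` has exactly
one real solution, and a point `x ∈ (0, t_f)` satisfies the interior equilibrium
condition `I(t_f - x)(m - x) = 1` if and only if it solves this equation. -/
theorem stmt11 (m tf I0 : ℝ) (hm : 1 < m) (htf : 0 < tf)
    (hI0 : I0 ∈ Set.Ioo (0:ℝ) 1) :
    (∃! x : ℝ, Real.exp x = Real.exp tf * (I0 / (1 - I0)) * (m - 1 - x)) ∧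
    ∀ x ∈ Set.Ioo (0:ℝ) tf,
      (Ifun I0 (tf - x) * (m - x) = 1 ↔
        Real.exp x = Real.exp tf * (I0 / (1 - I0)) * (m - 1 - x)) :=
  stmt11_general m tf I0 hI0
end

section
/- Let m > 0 and t_f > 0, and consider the constant-risk case I0 = 1, in which the restricted disutility of a delay strategy x against any population strategy is f(x) = 1 − exp(x − t_f)·(1 − x/m). Then f attains its global minimum on [0, t_f] at the unique point x* = min(t_f, max(m − 1, 0)): for all y ∈ [0, t_f] with y ≠ x*, f(x*) < f(y). -/
/-!
Up to the constant `1`, the disutility is `-g` with `g x = exp (x - t_f) * (1 - x / m)`, whose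
derivative `exp (x - t_f) * (m - 1 - x) / m` changes sign exactly once, at `x = m - 1`. So `g`
is unimodal with peak `m - 1`, and its unique maximiser on `[0, t_f]` is `m - 1` clamped to
that interval.
-/

open Set

theorem StrictMonoOn.lt_apply_clamp_of_strictAntiOn {α β : Type*} [LinearOrder α] [Preorder β]
    {g : α → β} {a lo hi y : α} (hinc : StrictMonoOn g (Iic a)) (hdec : StrictAntiOn g (Ici a))
    (hy : y ∈ Icc lo hi) (hne : y ≠ min hi (max a lo)) : g y < g (min hi (max a lo)) := by
  rcases hne.lt_or_gt with hlt | hgt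
  · have hlo : lo < a := by simpa using (hy.1.trans_lt hlt).trans_le (min_le_right _ _)
    have hxa : min hi (max a lo) ≤ a := by
      rw [max_eq_left hlo.le]
      exact min_le_right _ _
    exact hinc (hlt.le.trans hxa) hxa hlt
  · have hhi : max a lo < hi := by simpa using hgt.trans_le hy.2
    have hax : a ≤ min hi (max a lo) := by
      rw [min_eq_right hhi.le]
      exact le_max_left _ _
    exact hdec hax (hax.trans hgt.le) hgt

namespace Real

theorem hasDerivAt_exp_sub_mul_one_sub_div {c m : ℝ} (hm : m ≠ 0) (x : ℝ) :
    HasDerivAt (fun x => exp (x - c) * (1 - x / m)) (exp (x - c) * ((m - 1 - x) / m)) x := by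
  have hexp : HasDerivAt (fun x => exp (x - c)) (exp (x - c)) x := by
    simpa using ((hasDerivAt_id x).sub_const c).exp
  have hlin : HasDerivAt (fun x => 1 - x / m) (-(1 / m)) x := by
    simpa using ((hasDerivAt_id x).div_const m).const_sub 1
  refine (hexp.mul hlin).congr_deriv ?_
  field_simp
  ring

theorem strictMonoOn_exp_sub_mul_one_sub_div {c m : ℝ} (hm : 0 < m) :
    StrictMonoOn (fun x => exp (x - c) * (1 - x / m)) (Iic (m - 1)) := by
  refine strictMonoOn_of_deriv_pos (convex_Iic _) (by fun_prop) fun x hx => ?_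
  rw [interior_Iic, mem_Iio] at hx
  rw [(hasDerivAt_exp_sub_mul_one_sub_div hm.ne' x).deriv]
  have : 0 < m - 1 - x := by linarith
  positivity

theorem strictAntiOn_exp_sub_mul_one_sub_div {c m : ℝ} (hm : 0 < m) :
    StrictAntiOn (fun x => exp (x - c) * (1 - x / m)) (Ici (m - 1)) := by
  refine strictAntiOn_of_deriv_neg (convex_Ici _) (by fun_prop) fun x hx => ?_
  rw [interior_Ici, mem_Ioi] at hx
  rw [(hasDerivAt_exp_sub_mul_one_sub_div hm.ne' x).deriv]
  exact mul_neg_of_pos_of_neg (exp_pos _) (div_neg_of_neg_of_pos (by linarith) hm)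

end Real

theorem stmt12_general (m tf : ℝ) (hm : 0 < m) :
    ∀ y ∈ Set.Icc (0:ℝ) tf, y ≠ min tf (max (m - 1) 0) →
      1 - Real.exp (min tf (max (m - 1) 0) - tf) * (1 - min tf (max (m - 1) 0) / m)
        < 1 - Real.exp (y - tf) * (1 - y / m) := fun _ hy hne =>
  sub_lt_sub_left ((Real.strictMonoOn_exp_sub_mul_one_sub_div hm).lt_apply_clamp_of_strictAntiOn
    (Real.strictAntiOn_exp_sub_mul_one_sub_div hm) hy hne) 1

/-- In the constant-risk case `I0 = 1`, the disutility
`f(x) = 1 - exp(x - t_f)(1 - x/m)` attains its strict global minimum on `[0, t_f]`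
at the unique point `x* = min(t_f, max(m - 1, 0))`. -/
theorem stmt12 (m tf : ℝ) (hm : 0 < m) (htf : 0 < tf) :
    ∀ y ∈ Set.Icc (0:ℝ) tf, y ≠ min tf (max (m - 1) 0) →
      1 - Real.exp (min tf (max (m - 1) 0) - tf) * (1 - min tf (max (m - 1) 0) / m)
        < 1 - Real.exp (y - tf) * (1 - y / m) :=
  stmt12_general m tf hm
end

section
/- Let m > 0. Let I : [0,∞) → (0,1] and c : [0,∞) → [0, 1/m] be continuous, and let V : [0,∞) → ℝ be differentiable with V'(t) = (1 − m·c(t))·I(t)·(V(t) + 1) + c(t) for all t ≥ 0, where additionally c(t) = 0 whenever I(t)·(V(t) + 1) < 1/m (the optimal-feedback selection). If there exists t ≥ 0 with V(t) = 0, then −1 ≤ V(0) ≤ 0. (Adjoint trajectories starting with V(0) < −1 decrease forever, and those starting with V(0) > 0 increase forever, so neither can satisfy the terminal condition V = 0.) -/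
/-!
While `V < -1` the decision potential `I (V + 1)` is negative, so the feedback rule switches
prevention off and `V' = I (V + 1) < 0`; while `V > -1` both terms of `V'` are nonnegative and
one of them is positive, so `V' > 0`. Hence a trajectory starting below `-1` can never climb
back to its initial level, one starting above `0` can never fall back to it, and in neither
case can it reach `V = 0`.
-/

open Set

theorem image_le_of_deriv_right_neg_at_level {f f' : ℝ → ℝ} {a b : ℝ}
    (hf : ContinuousOn f (Icc a b)) (hf' : ∀ x ∈ Ico a b, HasDerivWithinAt f (f' x) (Ici x) x)
    (bound : ∀ x ∈ Ico a b, f x = f a → f' x < 0) :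
    ∀ ⦃x⦄, x ∈ Icc a b → f x ≤ f a :=
  image_le_of_deriv_right_lt_deriv_boundary hf hf' le_rfl (fun _ => hasDerivAt_const _ (f a))
    bound

theorem image_ge_of_deriv_right_pos_at_level {f f' : ℝ → ℝ} {a b : ℝ}
    (hf : ContinuousOn f (Icc a b)) (hf' : ∀ x ∈ Ico a b, HasDerivWithinAt f (f' x) (Ici x) x)
    (bound : ∀ x ∈ Ico a b, f x = f a → 0 < f' x) :
    ∀ ⦃x⦄, x ∈ Icc a b → f a ≤ f x := fun _ hx =>
  neg_le_neg_iff.1 <| image_le_of_deriv_right_neg_at_level (f' := -f') hf.neg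
    (fun y hy => (hf' y hy).neg)
    (fun y hy hfy => neg_neg_of_pos (bound y hy (neg_inj.1 hfy))) hx

section AdjointRHS

variable {m I c v : ℝ}

theorem adjoint_rhs_neg_of_lt_neg_one (hm : 0 < m) (hI : 0 < I) (hv : v < -1)
    (hfeedback : I * (v + 1) < 1 / m → c = 0) :
    (1 - m * c) * I * (v + 1) + c < 0 := by
  have hpot : I * (v + 1) < 0 := mul_neg_of_pos_of_neg hI (by linarith)
  have hc : c = 0 := hfeedback (hpot.trans (by positivity))
  subst hc
  simpa using hpot

theorem adjoint_rhs_pos_of_neg_one_lt (hm : 0 < m) (hI : 0 < I) (hc : c ∈ Icc 0 (1 / m))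
    (hv : -1 < v) :
    0 < (1 - m * c) * I * (v + 1) + c := by
  have hσ : 0 ≤ 1 - m * c := by
    have := hc.2
    rw [le_div_iff₀ hm] at this
    linarith
  rcases hc.1.eq_or_lt with hc0 | hc0
  · subst hc0
    simpa using mul_pos hI (by linarith : 0 < v + 1)
  · have : 0 ≤ (1 - m * c) * I * (v + 1) :=
      mul_nonneg (mul_nonneg hσ hI.le) (by linarith)
    linarith

end AdjointRHS

theorem stmt13_general (m : ℝ) (hm : 0 < m) (I c V : ℝ → ℝ)
    (hI : ∀ t, 0 ≤ t → I t ∈ Set.Ioc (0:ℝ) 1)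
    (hc : ∀ t, 0 ≤ t → c t ∈ Set.Icc (0:ℝ) (1 / m))
    (hV : ∀ t, 0 ≤ t →
      HasDerivWithinAt V ((1 - m * c t) * I t * (V t + 1) + c t) (Set.Ici 0) t)
    (hfeedback : ∀ t, 0 ≤ t → I t * (V t + 1) < 1 / m → c t = 0)
    (hterm : ∃ t, 0 ≤ t ∧ V t = 0) :
    -1 ≤ V 0 ∧ V 0 ≤ 0 := by
  obtain ⟨T, hT0, hVT⟩ := hterm
  have hVcont : ContinuousOn V (Icc 0 T) := fun t ht =>
    (hV t ht.1).continuousWithinAt.mono Icc_subset_Ici_self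
  have hVright : ∀ t ∈ Ico 0 T, HasDerivWithinAt V
      ((1 - m * c t) * I t * (V t + 1) + c t) (Ici t) t := fun t ht =>
    (hV t ht.1).mono (Ici_subset_Ici.2 ht.1)
  have hT : T ∈ Icc 0 T := ⟨hT0, le_rfl⟩
  constructor
  · by_contra! h
    have := image_le_of_deriv_right_neg_at_level hVcont hVright (fun t ht hVt =>
      adjoint_rhs_neg_of_lt_neg_one hm (hI t ht.1).1 (hVt ▸ h) (hfeedback t ht.1)) hT
    linarith
  · by_contra! h
    have := image_ge_of_deriv_right_pos_at_level hVcont hVright (fun t ht hVt =>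
      adjoint_rhs_pos_of_neg_one_lt hm (hI t ht.1).1 (hc t ht.1) (by linarith)) hT
    linarith

/-- Adjoint trajectories of the SI social-distancing game satisfying the
feedback-optimal selection can only reach the terminal condition `V = 0` if the
initial shadow value lies in `[-1, 0]`. -/
theorem stmt13 (m : ℝ) (hm : 0 < m) (I c V : ℝ → ℝ)
    (hI : ∀ t, 0 ≤ t → I t ∈ Set.Ioc (0:ℝ) 1)
    (hc : ∀ t, 0 ≤ t → c t ∈ Set.Icc (0:ℝ) (1 / m))
    (hIcont : ContinuousOn I (Set.Ici 0))
    (hccont : ContinuousOn c (Set.Ici 0))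
    (hV : ∀ t, 0 ≤ t →
      HasDerivWithinAt V ((1 - m * c t) * I t * (V t + 1) + c t) (Set.Ici 0) t)
    (hfeedback : ∀ t, 0 ≤ t → I t * (V t + 1) < 1 / m → c t = 0)
    (hterm : ∃ t, 0 ≤ t ∧ V t = 0) :
    -1 ≤ V 0 ∧ V 0 ≤ 0 :=
  stmt13_general m hm I c V hI hc hV hfeedback hterm
end

section
/- Let m > 0 and I0 ∈ (0,1), and set Φ_c = I0·(m − 1)/(m·(1 − I0)). Define T : (0, I0] → ℝ by: T(Φ0) = m·(I0 − Φ0)/I0 if Φ0 ≥ 1/m; T(Φ0) = ln(1/Φ0 − (1 − I0)/I0) if Φ_c ≤ Φ0 < 1/m; and T(Φ0) = m − ln(m·Φ0) − (m·(1 − I0)·Φ0 + I0)/I0 if Φ0 < min(1/m, Φ_c). Then T is continuous and strictly decreasing on (0, I0], T(I0) = 0, T(Φ0) → ∞ as Φ0 → 0⁺, and T is a bijection from (0, I0] onto [0, ∞). Consequently, for every game duration t_f ∈ [0, ∞) there is exactly one initial decision potential Φ0 ∈ (0, I0] whose equilibrium trajectory satisfies the terminal condition at time t_f, so the subgame-perfect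 Nash equilibrium of the SI social-distancing game is unique. -/
open Filter

/-- The terminal-time function `T(Φ0)` of the equilibrium trajectory starting at
`(I0, Φ0)`: single-phase full distancing when `Φ0 ≥ 1/m`, single-phase no distancing
when `Φ_c ≤ Φ0 < 1/m` (with `Φ_c = I0 (m-1)/(m (1-I0))`), and two-phase otherwise. -/
noncomputable def Tfun (m I0 Φ0 : ℝ) : ℝ :=
  if 1 / m ≤ Φ0 then m * (I0 - Φ0) / I0
  else if I0 * (m - 1) / (m * (1 - I0)) ≤ Φ0 then
    Real.log (1 / Φ0 - (1 - I0) / I0)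
  else m - Real.log (m * Φ0) - (m * (1 - I0) * Φ0 + I0) / I0

/-!
On `(0, I0]` the function `Tfun m I0` is glued from at most two of its three closed-form
branches: the two-phase time near `0`, followed either by the full-distancing time (when
`m * I0 ≥ 1`, junction at `1 / m`) or by the no-distancing time (when `m * I0 < 1 < m`, junction
at `Φ_c`); for `m ≤ 1` it is the no-distancing time throughout. Each branch is continuous and
strictly decreasing, adjacent branches agree at their junction, and the two-phase and
no-distancing times blow up logarithmically at `0`. By the intermediate value theorem such a
function is a bijection from `(0, I0]` onto `[T(I0), ∞)`, and `T(I0) = 0`.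
-/

open Set Topology

theorem ContinuousOn.union_of_isClosed_right {α β : Type*} [TopologicalSpace α]
    [TopologicalSpace β] {f : α → β} {s t : Set α} (hs : ContinuousOn f s)
    (ht : ContinuousOn f t) (htc : IsClosed t) (hst : closure s ∩ t ⊆ s) :
    ContinuousOn f (s ∪ t) := by
  refine fun x hx ↦ .union ?_ ?_
  · by_cases hxs : x ∈ s
    · exact hs x hxs
    · refine continuousWithinAt_of_notMem_closure fun hcl ↦ hxs (hst ⟨hcl, ?_⟩)
      exact hx.resolve_left hxs
  · by_cases hxt : x ∈ t
    · exact ht x hxt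
    · exact continuousWithinAt_of_notMem_closure (by rwa [htc.closure_eq])

theorem continuousOn_strictAntiOn_tendsto_of_eqOn_Ioc_Icc {f L R : ℝ → ℝ} {a c b : ℝ}
    (hac : a < c) (hcb : c ≤ b) (hL : EqOn f L (Ioc a c)) (hR : EqOn f R (Icc c b))
    (hLc : ContinuousOn L (Ioc a c)) (hLa : StrictAntiOn L (Ioc a c))
    (hLt : Tendsto L (𝓝[>] a) atTop) (hRc : ContinuousOn R (Icc c b))
    (hRa : StrictAntiOn R (Icc c b)) :
    ContinuousOn f (Ioc a b) ∧ StrictAntiOn f (Ioc a b) ∧ Tendsto f (𝓝[>] a) atTop := by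
  rw [← Ioc_union_Icc_eq_Ioc hac hcb]
  refine ⟨?_, ?_, ?_⟩
  · refine (hLc.congr hL).union_of_isClosed_right (hRc.congr hR) isClosed_Icc ?_
    rw [closure_Ioc hac.ne]
    exact fun x hx ↦ ⟨hac.trans_le hx.2.1, hx.1.2⟩
  · exact (hLa.congr hL.symm).union (hRa.congr hR.symm) (isGreatest_Ioc hac) (isLeast_Icc hcb)
  · exact hLt.congr' (eventuallyEq_of_mem (Ioc_mem_nhdsGT hac) hL.symm)

theorem StrictAntiOn.bijOn_Ioc_Ici {f : ℝ → ℝ} {a b : ℝ} (hab : a < b)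
    (hc : ContinuousOn f (Ioc a b)) (ha : StrictAntiOn f (Ioc a b))
    (ht : Tendsto f (𝓝[>] a) atTop) : BijOn f (Ioc a b) (Ici (f b)) := by
  have hb : b ∈ Ioc a b := right_mem_Ioc.2 hab
  refine ⟨fun x hx ↦ ha.antitoneOn hx hb hx.2, ha.injOn, fun y hy ↦ ?_⟩
  obtain ⟨x, hyx, hx⟩ := ((ht.eventually_ge_atTop y).and (Ioo_mem_nhdsGT hab)).exists
  obtain ⟨z, hz, rfl⟩ := (hc.mono (Icc_subset_Ioc hx.1 le_rfl)).surjOn_Icc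
    (right_mem_Icc.2 hx.2.le) (left_mem_Icc.2 hx.2.le) ⟨hy, hyx⟩
  exact ⟨z, ⟨hx.1.trans_le hz.1, hz.2⟩, rfl⟩

noncomputable def fullDistancingTime (m I0 Φ : ℝ) : ℝ := m * (I0 - Φ) / I0

noncomputable def noDistancingTime (I0 Φ : ℝ) : ℝ := Real.log (1 / Φ - (1 - I0) / I0)

noncomputable def twoPhaseTime (m I0 Φ : ℝ) : ℝ :=
  m - Real.log (m * Φ) - (m * (1 - I0) * Φ + I0) / I0

section Pieces

variable {m I0 : ℝ}

theorem continuous_fullDistancingTime : Continuous (fullDistancingTime m I0) := by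
  unfold fullDistancingTime
  fun_prop

theorem strictAnti_fullDistancingTime (hm : 0 < m) (hI0 : 0 < I0) :
    StrictAnti (fullDistancingTime m I0) := fun x y hxy ↦ by
  unfold fullDistancingTime
  gcongr

theorem fullDistancingTime_self : fullDistancingTime m I0 I0 = 0 := by
  simp [fullDistancingTime]

theorem one_le_noDistancingTime_arg (hI0 : 0 < I0) {Φ : ℝ} (hΦ : Φ ∈ Ioc 0 I0) :
    1 ≤ 1 / Φ - (1 - I0) / I0 := by
  have : 1 / I0 ≤ 1 / Φ := one_div_le_one_div_of_le hΦ.1 hΦ.2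
  have : 1 / I0 - (1 - I0) / I0 = 1 := by field_simp; ring
  linarith

theorem continuousOn_noDistancingTime (hI0 : 0 < I0) :
    ContinuousOn (noDistancingTime I0) (Ioc 0 I0) := by
  refine ContinuousOn.log ?_ fun Φ hΦ ↦
    (one_pos.trans_le (one_le_noDistancingTime_arg hI0 hΦ)).ne'
  exact (continuousOn_const.div continuousOn_id fun Φ hΦ ↦ hΦ.1.ne').sub continuousOn_const

theorem strictAntiOn_noDistancingTime (hI0 : 0 < I0) :
    StrictAntiOn (noDistancingTime I0) (Ioc 0 I0) := fun x hx y hy hxy ↦ by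
  refine Real.log_lt_log (one_pos.trans_le (one_le_noDistancingTime_arg hI0 hy)) ?_
  gcongr
  exact hx.1

theorem noDistancingTime_self (hI0 : I0 ≠ 0) : noDistancingTime I0 I0 = 0 := by
  have : 1 / I0 - (1 - I0) / I0 = 1 := by field_simp; ring
  rw [noDistancingTime, this, Real.log_one]

theorem tendsto_noDistancingTime : Tendsto (noDistancingTime I0) (𝓝[>] 0) atTop := by
  refine Real.tendsto_log_atTop.comp (tendsto_atTop_add_const_right _ _ ?_)
  exact tendsto_inv_nhdsGT_zero.congr fun Φ ↦ (one_div Φ).symm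

theorem continuousOn_twoPhaseTime (hm : m ≠ 0) : ContinuousOn (twoPhaseTime m I0) (Ioi 0) := by
  unfold twoPhaseTime
  refine ContinuousOn.sub (continuousOn_const.sub ?_) (by fun_prop)
  exact (continuousOn_const.mul continuousOn_id).log fun Φ hΦ ↦ mul_ne_zero hm (ne_of_gt hΦ)

theorem strictAntiOn_twoPhaseTime (hm : 0 < m) (hI0 : 0 < I0) (hI1 : I0 ≤ 1) :
    StrictAntiOn (twoPhaseTime m I0) (Ioi 0) := fun x hx y hy hxy ↦ by
  have hlog : Real.log (m * x) < Real.log (m * y) :=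
    Real.log_lt_log (mul_pos hm hx) (by gcongr)
  have hlin : (m * (1 - I0) * x + I0) / I0 ≤ (m * (1 - I0) * y + I0) / I0 := by
    have : 0 ≤ 1 - I0 := by linarith
    gcongr
  unfold twoPhaseTime
  linarith

theorem tendsto_twoPhaseTime (hm : 0 < m) : Tendsto (twoPhaseTime m I0) (𝓝[>] 0) atTop := by
  have hmul : Tendsto (m * ·) (𝓝[>] 0) (𝓝[>] 0) := by
    simpa using (continuous_const_mul m).continuousWithinAt.tendsto_nhdsWithin
      (x := 0) (s := Ioi 0) (t := Ioi 0) fun Φ hΦ ↦ mul_pos hm hΦ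
  have hlog : Tendsto (fun Φ ↦ -Real.log (m * Φ)) (𝓝[>] 0) atTop :=
    tendsto_neg_atBot_atTop.comp (Real.tendsto_log_nhdsGT_zero.comp hmul)
  have hrest : Tendsto (fun Φ ↦ m - (m * (1 - I0) * Φ + I0) / I0) (𝓝[>] 0)
      (𝓝 (m - (m * (1 - I0) * 0 + I0) / I0)) :=
    (Continuous.tendsto (by fun_prop) 0).mono_left nhdsWithin_le_nhds
  exact (hlog.atTop_add hrest).congr fun Φ ↦ by unfold twoPhaseTime; ring

end Pieces

noncomputable def thresholdPotential (m I0 : ℝ) : ℝ := I0 * (m - 1) / (m * (1 - I0))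

section Regimes

variable {m I0 Φ : ℝ}

theorem Tfun_of_one_div_le (h : 1 / m ≤ Φ) : Tfun m I0 Φ = fullDistancingTime m I0 Φ :=
  if_pos h

theorem Tfun_of_thresholdPotential_le (h₁ : Φ < 1 / m) (h₂ : thresholdPotential m I0 ≤ Φ) :
    Tfun m I0 Φ = noDistancingTime I0 Φ :=
  (if_neg h₁.not_ge).trans (if_pos h₂)

theorem Tfun_of_lt_thresholdPotential (h₁ : Φ < 1 / m) (h₂ : Φ < thresholdPotential m I0) :
    Tfun m I0 Φ = twoPhaseTime m I0 Φ :=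
  (if_neg h₁.not_ge).trans (if_neg h₂.not_ge)

theorem twoPhaseTime_one_div (hm : m ≠ 0) (hI0 : I0 ≠ 0) :
    twoPhaseTime m I0 (1 / m) = fullDistancingTime m I0 (1 / m) := by
  rw [twoPhaseTime, fullDistancingTime, mul_one_div_cancel hm, Real.log_one]
  field_simp
  ring

theorem twoPhaseTime_thresholdPotential (hm : m ≠ 0) (hm1 : m ≠ 1) (hI0 : I0 ≠ 0)
    (hI1 : I0 ≠ 1) :
    twoPhaseTime m I0 (thresholdPotential m I0) =
      noDistancingTime I0 (thresholdPotential m I0) := by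
  have hm1' : m - 1 ≠ 0 := sub_ne_zero.2 hm1
  have hI1' : 1 - I0 ≠ 0 := sub_ne_zero.2 hI1.symm
  have harg : 1 / thresholdPotential m I0 - (1 - I0) / I0 =
      (m * thresholdPotential m I0)⁻¹ := by
    unfold thresholdPotential
    field_simp
    ring
  have hlin : (m * (1 - I0) * thresholdPotential m I0 + I0) / I0 = m := by
    unfold thresholdPotential
    field_simp
    ring
  rw [twoPhaseTime, noDistancingTime, harg, Real.log_inv, hlin]
  ring

theorem thresholdPotential_pos (hI0 : 0 < I0) (hI1 : I0 < 1) (hm1 : 1 < m) :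
    0 < thresholdPotential m I0 := by
  have : 0 < 1 - I0 := by linarith
  have : 0 < m - 1 := by linarith
  unfold thresholdPotential
  positivity

theorem thresholdPotential_nonpos (hm : 0 < m) (hI0 : 0 ≤ I0) (hI1 : I0 < 1) (hm1 : m ≤ 1) :
    thresholdPotential m I0 ≤ 0 := by
  have : 0 < 1 - I0 := by linarith
  exact div_nonpos_of_nonpos_of_nonneg (mul_nonpos_of_nonneg_of_nonpos hI0 (by linarith))
    (by positivity)

theorem thresholdPotential_le_self (hm : 0 < m) (hI0 : 0 ≤ I0) (hI1 : I0 < 1)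
    (h : m * I0 ≤ 1) : thresholdPotential m I0 ≤ I0 := by
  have : 0 < 1 - I0 := by linarith
  rw [thresholdPotential, div_le_iff₀ (by positivity)]
  nlinarith [mul_nonneg hI0 (sub_nonneg.2 h)]

theorem one_div_le_thresholdPotential (hm : 0 < m) (hI1 : I0 < 1) (h : 1 ≤ m * I0) :
    1 / m ≤ thresholdPotential m I0 := by
  have : 0 < 1 - I0 := by linarith
  rw [thresholdPotential, div_le_div_iff₀ hm (by positivity)]
  nlinarith

theorem Tfun_eqOn_twoPhaseTime_of_one_le_mul (hm : 0 < m) (hI1 : I0 < 1) (h : 1 ≤ m * I0) :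
    EqOn (Tfun m I0) (twoPhaseTime m I0) (Ioc 0 (1 / m)) := by
  intro Φ hΦ
  rcases hΦ.2.eq_or_lt with rfl | hlt
  · have hI0 : I0 ≠ 0 := by rintro rfl; norm_num at h
    rw [Tfun_of_one_div_le le_rfl, twoPhaseTime_one_div hm.ne' hI0]
  · exact Tfun_of_lt_thresholdPotential hlt (hlt.trans_le (one_div_le_thresholdPotential hm hI1 h))

theorem lt_one_div_of_mul_lt_one (hm : 0 < m) (h : m * I0 < 1) (hΦ : Φ ≤ I0) : Φ < 1 / m := by
  rw [lt_div_iff₀ hm]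
  nlinarith

theorem Tfun_eqOn_twoPhaseTime_of_mul_lt_one (hm : 0 < m) (hI0 : 0 < I0) (hI1 : I0 < 1)
    (hm1 : 1 < m) (h : m * I0 < 1) :
    EqOn (Tfun m I0) (twoPhaseTime m I0) (Ioc 0 (thresholdPotential m I0)) := by
  intro Φ hΦ
  have hΦI0 : Φ < 1 / m :=
    lt_one_div_of_mul_lt_one hm h (hΦ.2.trans (thresholdPotential_le_self hm hI0.le hI1 h.le))
  rcases hΦ.2.eq_or_lt with rfl | hlt
  · rw [Tfun_of_thresholdPotential_le hΦI0 le_rfl,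
      twoPhaseTime_thresholdPotential hm.ne' hm1.ne' hI0.ne' hI1.ne]
  · exact Tfun_of_lt_thresholdPotential hΦI0 hlt

theorem Tfun_eqOn_noDistancingTime_of_mul_lt_one (hm : 0 < m) (h : m * I0 < 1) :
    EqOn (Tfun m I0) (noDistancingTime I0) (Icc (thresholdPotential m I0) I0) :=
  fun _ hΦ ↦ Tfun_of_thresholdPotential_le (lt_one_div_of_mul_lt_one hm h hΦ.2) hΦ.1

end Regimes

theorem Tfun_continuousOn_strictAntiOn_tendsto {m I0 : ℝ} (hm : 0 < m) (hI0 : 0 < I0)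
    (hI1 : I0 < 1) :
    ContinuousOn (Tfun m I0) (Ioc 0 I0) ∧ StrictAntiOn (Tfun m I0) (Ioc 0 I0) ∧
      Tendsto (Tfun m I0) (𝓝[>] 0) atTop := by
  rcases le_or_gt 1 (m * I0) with h | h
  · have hmI0 : 1 / m ≤ I0 := by rw [div_le_iff₀ hm]; linarith
    exact continuousOn_strictAntiOn_tendsto_of_eqOn_Ioc_Icc (by positivity) hmI0
      (Tfun_eqOn_twoPhaseTime_of_one_le_mul hm hI1 h) (fun _ hΦ ↦ Tfun_of_one_div_le hΦ.1)
      ((continuousOn_twoPhaseTime hm.ne').mono Ioc_subset_Ioi_self)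
      ((strictAntiOn_twoPhaseTime hm hI0 hI1.le).mono Ioc_subset_Ioi_self)
      (tendsto_twoPhaseTime hm) continuous_fullDistancingTime.continuousOn
      ((strictAnti_fullDistancingTime hm hI0).strictAntiOn _)
  rcases le_or_gt m 1 with hm1 | hm1
  · have hEq : EqOn (Tfun m I0) (noDistancingTime I0) (Ioc 0 I0) :=
      (Tfun_eqOn_noDistancingTime_of_mul_lt_one hm h).mono <| Ioc_subset_Icc_self.trans <|
        Icc_subset_Icc_left (thresholdPotential_nonpos hm hI0.le hI1 hm1)
    exact ⟨(continuousOn_noDistancingTime hI0).congr hEq,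
      (strictAntiOn_noDistancingTime hI0).congr hEq.symm,
      tendsto_noDistancingTime.congr' (eventuallyEq_of_mem (Ioc_mem_nhdsGT hI0) hEq.symm)⟩
  · have hc := thresholdPotential_pos hI0 hI1 hm1
    exact continuousOn_strictAntiOn_tendsto_of_eqOn_Ioc_Icc hc
      (thresholdPotential_le_self hm hI0.le hI1 h.le)
      (Tfun_eqOn_twoPhaseTime_of_mul_lt_one hm hI0 hI1 hm1 h)
      (Tfun_eqOn_noDistancingTime_of_mul_lt_one hm h)
      ((continuousOn_twoPhaseTime hm.ne').mono Ioc_subset_Ioi_self)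
      ((strictAntiOn_twoPhaseTime hm hI0 hI1.le).mono Ioc_subset_Ioi_self)
      (tendsto_twoPhaseTime hm)
      ((continuousOn_noDistancingTime hI0).mono (Icc_subset_Ioc hc le_rfl))
      ((strictAntiOn_noDistancingTime hI0).mono (Icc_subset_Ioc hc le_rfl))

theorem Tfun_self {m I0 : ℝ} (hm : 0 < m) (hI0 : 0 < I0) (hI1 : I0 < 1) : Tfun m I0 I0 = 0 := by
  rcases le_or_gt (1 / m) I0 with h | h
  · rw [Tfun_of_one_div_le h, fullDistancingTime_self]
  · have hmI0 : m * I0 ≤ 1 := by rw [lt_div_iff₀ hm] at h; linarith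
    rw [Tfun_of_thresholdPotential_le h (thresholdPotential_le_self hm hI0.le hI1 hmI0),
      noDistancingTime_self hI0.ne']

/-- The terminal-time function `T` is continuous and strictly decreasing on `(0, I0]`,
with `T(I0) = 0` and `T(Φ0) → ∞` as `Φ0 → 0⁺`, and is a bijection from `(0, I0]` onto
`[0, ∞)`.  Consequently, for each game duration `t_f ≥ 0` there is exactly one initial
decision potential whose equilibrium trajectory meets the terminal condition at `t_f`,
so the subgame-perfect Nash equilibrium of the SI social-distancing game is unique. -/
theorem stmt17 (m I0 : ℝ) (hm : 0 < m) (hI0 : I0 ∈ Set.Ioo (0:ℝ) 1) :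
    ContinuousOn (Tfun m I0) (Set.Ioc 0 I0) ∧
    StrictAntiOn (Tfun m I0) (Set.Ioc 0 I0) ∧
    Tfun m I0 I0 = 0 ∧
    Tendsto (Tfun m I0) (nhdsWithin 0 (Set.Ioi 0)) atTop ∧
    Set.BijOn (Tfun m I0) (Set.Ioc 0 I0) (Set.Ici 0) ∧
    ∀ tf : ℝ, 0 ≤ tf → ∃! Φ0, Φ0 ∈ Set.Ioc (0:ℝ) I0 ∧ Tfun m I0 Φ0 = tf := by
  obtain ⟨hI0, hI1⟩ := hI0
  obtain ⟨hcont, hanti, htop⟩ := Tfun_continuousOn_strictAntiOn_tendsto hm hI0 hI1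
  have hzero := Tfun_self hm hI0 hI1
  have hbij : BijOn (Tfun m I0) (Ioc 0 I0) (Ici 0) := by
    simpa only [hzero] using StrictAntiOn.bijOn_Ioc_Ici hI0 hcont hanti htop
  refine ⟨hcont, hanti, hzero, htop, hbij, fun tf htf ↦ ?_⟩
  obtain ⟨Φ0, hΦ0, rfl⟩ := hbij.surjOn htf
  exact ⟨Φ0, ⟨hΦ0, rfl⟩, fun Ψ hΨ ↦ hbij.injOn hΨ.1 hΦ0 hΨ.2⟩
end

section
/- Let m > 0, t_f > 0, I0 ∈ (0,1). For all x, x̄ ∈ [0, t_f], the restricted disutility satisfies the lower bound 𝒟(x, x̄) ≥ min(1/m, I0)·(1 − exp(−t_f)): the epidemic always imposes an unavoidable positive expected cost on each individual, no matter which delay strategy they choose against any population strategy. -/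
open Real

lemma exp_mul_le_one_sub_add_mul_exp {a : ℝ} (ha₀ : 0 ≤ a) (ha₁ : a ≤ 1) (t : ℝ) :
    exp (a * t) ≤ 1 - a + a * exp t := by
  simpa using convexOn_exp.2 (Set.mem_univ 0) (Set.mem_univ t) (sub_nonneg.2 ha₁) ha₀ (by ring)

lemma one_sub_add_mul_mul_le {a u v : ℝ} (ha₀ : 0 ≤ a) (ha₁ : a ≤ 1) (hu : u ≤ 1) (hv : v ≤ 1) :
    (1 - a + a * u) * (1 - a + a * v) ≤ 1 - a + a * (u * v) := by
  nlinarith [mul_nonneg (mul_nonneg ha₀ (sub_nonneg.2 ha₁))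
    (mul_nonneg (sub_nonneg.2 hu) (sub_nonneg.2 hv))]

section Prevalence

variable {I0 : ℝ}

lemma Ifun_le_one (h₀ : 0 ≤ I0) (h₁ : I0 ≤ 1) (s : ℝ) : Ifun I0 s ≤ 1 :=
  div_le_one_of_le₀ (le_add_of_nonneg_right (by positivity)) (by positivity)

lemma le_Ifun (h₀ : 0 < I0) (h₁ : I0 ≤ 1) {s : ℝ} (hs : 0 ≤ s) : I0 ≤ Ifun I0 s := by
  have hexp : exp (-s) ≤ 1 := exp_le_one_iff.2 (neg_nonpos.2 hs)
  refine le_div_self h₀.le (by positivity) ?_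
  nlinarith

lemma one_sub_Ifun_div_le (h₀ : 0 ≤ I0) (h₁ : I0 < 1) (s : ℝ) :
    (1 - Ifun I0 s) / (1 - I0) ≤ 1 - I0 + I0 * exp (-s) := by
  have hq : 0 < 1 - I0 := sub_pos.2 h₁
  have hD : 0 < I0 + (1 - I0) * exp (-s) := by positivity
  have hrepr : (1 - Ifun I0 s) / (1 - I0) = exp (-s) / (I0 + (1 - I0) * exp (-s)) := by
    rw [Ifun]; field_simp; ring
  rw [hrepr, div_le_iff₀ hD]
  nlinarith [mul_nonneg (mul_nonneg h₀ hq.le) (sq_nonneg (1 - exp (-s)))]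

lemma exp_neg_Ifun_mul_le (h₀ : 0 < I0) (h₁ : I0 ≤ 1) {s d : ℝ} (hs : 0 ≤ s) (hd : 0 ≤ d) :
    exp (-Ifun I0 s * d) ≤ 1 - I0 + I0 * exp (-d) :=
  calc exp (-Ifun I0 s * d) ≤ exp (I0 * -d) :=
        exp_le_exp.2 (by nlinarith [le_Ifun h₀ h₁ hs])
    _ ≤ 1 - I0 + I0 * exp (-d) := exp_mul_le_one_sub_add_mul_exp h₀.le h₁ _

variable {tf x xb : ℝ}

lemma pSus_nonneg (h₀ : 0 ≤ I0) (h₁ : I0 < 1) : 0 ≤ pSus tf I0 x xb :=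
  mul_nonneg (div_nonneg (sub_nonneg.2 (Ifun_le_one h₀ h₁.le _)) (sub_pos.2 h₁).le)
    (exp_pos _).le

lemma pSus_le (h₀ : 0 < I0) (h₁ : I0 < 1) (hx : x ≤ tf) (hxb : xb ≤ tf) :
    pSus tf I0 x xb ≤ 1 - I0 + I0 * exp (x - tf) := by
  set s := tf - max x xb
  set d := max (xb - x) 0
  have hs : 0 ≤ s := sub_nonneg.2 (max_le hx hxb)
  have hd : 0 ≤ d := le_max_right _ _
  have hsd : s + d = tf - x := by
    rcases le_total x xb with h | h
    · simp only [s, d, max_eq_right h, max_eq_left (sub_nonneg.2 h)]; ring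
    · simp only [s, d, max_eq_left h, max_eq_right (sub_nonpos.2 h)]; ring
  calc pSus tf I0 x xb = (1 - Ifun I0 s) / (1 - I0) * exp (-Ifun I0 s * d) := rfl
    _ ≤ (1 - I0 + I0 * exp (-s)) * (1 - I0 + I0 * exp (-d)) :=
        mul_le_mul (one_sub_Ifun_div_le h₀.le h₁ s) (exp_neg_Ifun_mul_le h₀ h₁.le hs hd)
          (exp_pos _).le (by positivity)
    _ ≤ 1 - I0 + I0 * (exp (-s) * exp (-d)) :=
        one_sub_add_mul_mul_le h₀.le h₁.le (exp_le_one_iff.2 (by linarith))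
          (exp_le_one_iff.2 (by linarith))
    _ = 1 - I0 + I0 * exp (x - tf) := by rw [← exp_add, ← neg_add, hsd, neg_sub]

end Prevalence

lemma exp_sub_sub_exp_neg_le_mul (x t : ℝ) : exp (x - t) - exp (-t) ≤ x * exp (x - t) := by
  have h := mul_le_mul_of_nonneg_left (add_one_le_exp (-x)) (exp_pos (x - t)).le
  rw [← exp_add, show x - t + -x = -t by ring] at h
  linarith

lemma mul_one_sub_exp_neg_le {m tf I0 c x p : ℝ} (hm : 0 < m) (hI0 : I0 ≤ 1)
    (hc₀ : 0 ≤ c) (hcm : c ≤ 1 / m) (hcI0 : c ≤ I0) (hx₀ : 0 ≤ x) (hx : x ≤ tf)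
    (hp₀ : 0 ≤ p) (hp : p ≤ 1 - I0 + I0 * exp (x - tf)) :
    c * (1 - exp (-tf)) ≤ 1 - p * (1 - x / m) := by
  have hexp : 0 < exp (-tf) := exp_pos _
  rcases le_or_gt m x with hmx | hxm
  · have : p * (1 - x / m) ≤ 0 :=
      mul_nonpos_of_nonneg_of_nonpos hp₀ (sub_nonpos.2 ((one_le_div hm).2 hmx))
    nlinarith
  · set E := exp (x - tf)
    have hE₁ : E ≤ 1 := exp_le_one_iff.2 (sub_nonpos.2 hx)
    have hw : 0 ≤ 1 - x / m := sub_nonneg.2 ((div_le_one hm).2 hxm.le)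
    have hxm' : c * x ≤ x / m := by rw [div_eq_mul_one_div, mul_comm]; gcongr
    have hrest : E ≤ 1 - I0 * (1 - E) := by nlinarith
    calc c * (1 - exp (-tf)) ≤ c * (1 - E) + c * x * E := by
          nlinarith [exp_sub_sub_exp_neg_le_mul x tf]
      _ ≤ I0 * (1 - E) + x / m * (1 - I0 * (1 - E)) := by
          gcongr
      _ = 1 - (1 - I0 + I0 * E) * (1 - x / m) := by ring
      _ ≤ 1 - p * (1 - x / m) := by gcongr

theorem stmt19_general (m tf I0 : ℝ) (hm : 0 < m)
    (hI0 : I0 ∈ Set.Ioo (0:ℝ) 1) :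
    ∀ x ∈ Set.Icc (0:ℝ) tf, ∀ xb ∈ Set.Icc (0:ℝ) tf,
      min (1 / m) I0 * (1 - Real.exp (-tf)) ≤ Dis m tf I0 x xb := by
  obtain ⟨hI0₀, hI0₁⟩ := hI0
  rintro x ⟨hx₀, hx⟩ xb ⟨-, hxb⟩
  exact mul_one_sub_exp_neg_le hm hI0₁.le (le_min (by positivity) hI0₀.le) (min_le_left _ _)
    (min_le_right _ _) hx₀ hx (pSus_nonneg hI0₀.le hI0₁) (pSus_le hI0₀ hI0₁ hx hxb)

/-- The epidemic always imposes an unavoidable positive expected cost: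
`𝒟(x, x̄) ≥ min(1/m, I0)(1 - exp(-t_f))` for all delay strategies. -/
theorem stmt19 (m tf I0 : ℝ) (hm : 0 < m) (htf : 0 < tf)
    (hI0 : I0 ∈ Set.Ioo (0:ℝ) 1) :
    ∀ x ∈ Set.Icc (0:ℝ) tf, ∀ xb ∈ Set.Icc (0:ℝ) tf,
      min (1 / m) I0 * (1 - Real.exp (-tf)) ≤ Dis m tf I0 x xb :=
  stmt19_general m tf I0 hm hI0
end
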